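/- arXiv:1902.05932 — 5 statements merged into one kernel-verified Lean document; each statement's English description precedes it below -/
import Mathlib

section
/- Let μ be a finite positive Borel measure on the open unit disk 𝔻, and let φ : (0, 2π] → (0, ∞) be an increasing function with ∫₀^{2π} φ(x)/x dx < ∞. Suppose there exist constants C > 0 and ε > 0 such that μ(S(I)) ≤ C·φ(|I|) for every arc I of the unit circle with |I| < ε. Then sup over w ∈ 𝔻 of ∫_𝔻 log(2/|1 − w̄z|) dμ(z) is finite. -/
open MeasureTheory Metric Complex Filter Set

noncomputable section

/-- Membership in the Dirichlet space: `f` is holomorphic on the unit disk and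
its Dirichlet integral is finite. -/
def InDirichlet (f : ℂ → ℂ) : Prop :=
  DifferentiableOn ℂ f (Metric.ball (0:ℂ) 1) ∧
    IntegrableOn (fun z => ‖deriv f z‖ ^ 2) (Metric.ball (0:ℂ) 1) volume

/-- The square of the Dirichlet norm: `‖f‖_𝒟² = |f(0)|² + (1/π)∫_𝔻 |f′|² dA`. -/
def dirichletNormSq (f : ℂ → ℂ) : ℝ :=
  ‖f 0‖ ^ 2 + (1 / Real.pi) * ∫ z in Metric.ball (0:ℂ) 1, ‖deriv f z‖ ^ 2

/-- `μ` is a Carleson measure for the Dirichlet space. -/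
def IsCarlesonDirichlet (μ : Measure ℂ) : Prop :=
  ∃ C : ℝ, ∀ f : ℂ → ℂ, InDirichlet f →
    ∫⁻ z in Metric.ball (0:ℂ) 1, ENNReal.ofReal (‖f z‖ ^ 2) ∂μ ≤
      ENNReal.ofReal (C * dirichletNormSq f)

/-- The Carleson box `S(I)` over the arc `I = {e^{iα} : θ ≤ α ≤ θ + ℓ}` of arclength `ℓ`. -/
def carlesonBox (θ ℓ : ℝ) : Set ℂ :=
  {z : ℂ | ∃ r α : ℝ, 1 - ℓ < r ∧ r < 1 ∧ θ ≤ α ∧ α ≤ θ + ℓ ∧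
    z = r * Complex.exp (α * Complex.I)}

lemma geom_subset (w : ℂ) (hw1 : ‖w‖ < 1) (hw2 : 1/2 < ‖w‖) {δ : ℝ} (hδ0 : 0 < δ) :
    {z : ℂ | ‖1 - (starRingEnd ℂ) w * z‖ < δ} ∩ Metric.ball (0:ℂ) 1 ⊆
      carlesonBox (Complex.arg w - 10*δ) (20*δ) := by
  rintro z ⟨hz1, hz2⟩
  simp only [Set.mem_setOf_eq] at hz1
  rw [Metric.mem_ball, dist_zero_right] at hz2
  set r := ‖z‖ with hr
  set β := Complex.arg w with hβ
  have hw0 : (0:ℝ) < ‖w‖ := by linarith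
  have hr0 : (0:ℝ) ≤ r := norm_nonneg z
  -- 1 - r < δ and 1 - ‖w‖ < δ
  have h1 : 1 - ‖w‖ * r ≤ ‖1 - (starRingEnd ℂ) w * z‖ := by
    have := norm_sub_norm_le (1 : ℂ) ((starRingEnd ℂ) w * z)
    simpa [norm_mul] using this
  have hr1 : 1 - r < δ := by nlinarith
  have hw1' : 1 - ‖w‖ < δ := by nlinarith
  -- set up u and ζ
  set u := Complex.exp ((β : ℂ) * Complex.I) with hu
  have hu1 : ‖u‖ = 1 := Complex.norm_exp_ofReal_mul_I β
  have huu : u * (starRingEnd ℂ) u = 1 := by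
    rw [Complex.mul_conj, Complex.normSq_eq_norm_sq, hu1]; norm_num
  set ζ := z * (starRingEnd ℂ) u with hζdef
  have hzu : z = ζ * u := by
    rw [hζdef]; rw [mul_assoc, mul_comm ((starRingEnd ℂ) u) u, huu, mul_one]
  have hw : ((‖w‖ : ℝ) : ℂ) * u = w := by
    rw [hu, hβ]
    exact Complex.norm_mul_exp_arg_mul_I w
  have hcw : (starRingEnd ℂ) w * u = ((‖w‖ : ℝ) : ℂ) := by
    have : (starRingEnd ℂ) w = ((‖w‖ : ℝ) : ℂ) * (starRingEnd ℂ) u := by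
      conv_lhs => rw [← hw]
      rw [map_mul, Complex.conj_ofReal]
    rw [this, mul_assoc, mul_comm ((starRingEnd ℂ) u) u, huu, mul_one]
  have hcwz : (starRingEnd ℂ) w * z = ((‖w‖ : ℝ) : ℂ) * ζ := by
    rw [hzu, ← mul_assoc, mul_comm ((starRingEnd ℂ) w) ζ, mul_assoc, hcw, mul_comm]
  -- ‖ζ - 1‖ < 4δ
  have hζnorm : ‖ζ‖ = r := by
    have h9 : ‖(starRingEnd ℂ) u‖ = 1 := by
      rw [Complex.norm_conj, hu1]
    rw [hζdef, norm_mul, h9, mul_one]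
  have hζ4 : ‖ζ - 1‖ < 4 * δ := by
    have key : ‖w‖ * ‖ζ - 1‖ ≤ ‖1 - (starRingEnd ℂ) w * z‖ + (1 - ‖w‖) := by
      have e1 : (((‖w‖ : ℝ)) : ℂ) * (ζ - 1) =
          -(1 - (starRingEnd ℂ) w * z) + (1 - ((‖w‖:ℝ):ℂ)) := by
        rw [hcwz]; ring
      have e2 : ‖(((‖w‖ : ℝ)) : ℂ) * (ζ - 1)‖ = ‖w‖ * ‖ζ - 1‖ := by
        rw [norm_mul, Complex.norm_real, Real.norm_of_nonneg hw0.le]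
      calc ‖w‖ * ‖ζ - 1‖ = ‖-(1 - (starRingEnd ℂ) w * z) + (1 - ((‖w‖:ℝ):ℂ))‖ := by
            rw [← e2, e1]
        _ ≤ ‖-(1 - (starRingEnd ℂ) w * z)‖ + ‖(1 - ((‖w‖:ℝ):ℂ))‖ := norm_add_le _ _
        _ = ‖1 - (starRingEnd ℂ) w * z‖ + ‖(1:ℂ) - ((‖w‖:ℝ):ℂ)‖ := by rw [norm_neg]
        _ = ‖1 - (starRingEnd ℂ) w * z‖ + (1 - ‖w‖) := by
            congr 1
            rw [show (1:ℂ) - ((‖w‖:ℝ):ℂ) = (((1 - ‖w‖ : ℝ)):ℂ) by push_cast; ring,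
              Complex.norm_real, Real.norm_of_nonneg (by linarith)]
    nlinarith
  -- the angle γ
  set γ := Complex.arg ζ with hγ
  have hγlo : -Real.pi < γ := Complex.neg_pi_lt_arg ζ
  have hγhi : γ ≤ Real.pi := Complex.arg_le_pi ζ
  have hζeq : ((r : ℝ) : ℂ) * Complex.exp ((γ:ℂ) * Complex.I) = ζ := by
    rw [hγ, ← hζnorm]
    exact Complex.norm_mul_exp_arg_mul_I ζ
  have he5 : ‖Complex.exp ((γ:ℂ) * Complex.I) - 1‖ < 5 * δ := by
    have e1 : Complex.exp ((γ:ℂ) * Complex.I) - 1 =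
        (1 - ((r:ℝ):ℂ)) * Complex.exp ((γ:ℂ) * Complex.I) + (ζ - 1) := by
      rw [← hζeq]; ring
    have e2 : ‖(1 - ((r:ℝ):ℂ)) * Complex.exp ((γ:ℂ) * Complex.I)‖ = 1 - r := by
      rw [norm_mul, show (1:ℂ) - ((r:ℝ):ℂ) = (((1 - r : ℝ)):ℂ) by push_cast; ring,
        Complex.norm_real, Real.norm_of_nonneg (by linarith),
        Complex.norm_exp_ofReal_mul_I, mul_one]
    calc ‖Complex.exp ((γ:ℂ) * Complex.I) - 1‖
        ≤ ‖(1 - ((r:ℝ):ℂ)) * Complex.exp ((γ:ℂ) * Complex.I)‖ + ‖ζ - 1‖ := by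
          rw [e1]; exact norm_add_le _ _
      _ < 5 * δ := by rw [e2]; linarith
  -- ‖e^{iγ}-1‖² = 2 - 2 cos γ = 4 sin²(γ/2)
  have hsq : ‖Complex.exp ((γ:ℂ) * Complex.I) - 1‖^2 = 4 * Real.sin (γ/2)^2 := by
    rw [Complex.exp_mul_I]
    have hre : ((Complex.cos γ + Complex.sin γ * Complex.I) - 1).re = Real.cos γ - 1 := by
      simp [Complex.cos_ofReal_re, Complex.sin_ofReal_re, Complex.cos_ofReal_im,
        Complex.sin_ofReal_im]
    have him : ((Complex.cos γ + Complex.sin γ * Complex.I) - 1).im = Real.sin γ := by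
      simp [Complex.cos_ofReal_re, Complex.sin_ofReal_re, Complex.cos_ofReal_im,
        Complex.sin_ofReal_im]
    rw [Complex.sq_norm, Complex.normSq_apply, hre, him]
    have h5 : Real.cos γ = Real.cos (γ/2)^2 - Real.sin (γ/2)^2 := by
      rw [← Real.cos_two_mul']; congr 1; ring
    have h5' : Real.sin γ = 2 * Real.sin (γ/2) * Real.cos (γ/2) := by
      rw [← Real.sin_two_mul]; congr 1; ring
    have h6 := Real.sin_sq_add_cos_sq (γ/2)
    rw [h5, h5']
    linear_combination (Real.sin (γ/2)^2 + Real.cos (γ/2)^2 - 1) * h6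
  have hsin : |Real.sin (γ/2)| < 5 * δ / 2 := by
    have h0 := norm_nonneg (Complex.exp ((γ:ℂ) * Complex.I) - 1)
    have h1 : ‖Complex.exp ((γ:ℂ) * Complex.I) - 1‖^2 < (5*δ)^2 := by nlinarith
    rw [hsq] at h1
    nlinarith [_root_.sq_abs (Real.sin (γ/2)), abs_nonneg (Real.sin (γ/2)),
      sq_nonneg (2 * |Real.sin (γ/2)| - 5*δ)]
  have hγbound : |γ| ≤ 10 * δ := by
    have hπ0 := Real.pi_pos
    have hπ4 := Real.pi_le_four
    have hγπ : |γ| ≤ Real.pi := abs_le.mpr ⟨by linarith, hγhi⟩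
    have hhalf : |γ/2| ≤ Real.pi / 2 := by
      rw [_root_.abs_div, _root_.abs_two]; linarith
    have hj := Real.mul_abs_le_abs_sin hhalf
    rw [_root_.abs_div, _root_.abs_two] at hj
    have h7 : |γ| / Real.pi ≤ |Real.sin (γ/2)| := by
      calc |γ| / Real.pi = 2 / Real.pi * (|γ| / 2) := by ring
        _ ≤ _ := hj
    have h9 : |γ| / Real.pi < 5 * δ / 2 := lt_of_le_of_lt h7 hsin
    have h8 : |γ| < Real.pi * (5 * δ / 2) := by
      calc |γ| = |γ| / Real.pi * Real.pi := (div_mul_cancel₀ _ hπ0.ne').symm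
        _ < 5 * δ / 2 * Real.pi := mul_lt_mul_of_pos_right h9 hπ0
        _ = Real.pi * (5 * δ / 2) := by ring
    nlinarith
  -- conclude
  refine ⟨r, β + γ, by linarith, hz2, ?_, ?_, ?_⟩
  · have := neg_abs_le γ; linarith
  · have := le_abs_self γ; linarith
  · rw [hzu, ← hζeq, hu]
    rw [mul_assoc, ← Complex.exp_add]
    push_cast
    ring_nf

lemma norm_one_sub_ge (w z : ℂ) : 1 - ‖w‖ * ‖z‖ ≤ ‖1 - (starRingEnd ℂ) w * z‖ := by
  have := norm_sub_norm_le (1 : ℂ) ((starRingEnd ℂ) w * z)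
  simpa [norm_mul] using this

lemma norm_one_sub_le (w z : ℂ) : ‖1 - (starRingEnd ℂ) w * z‖ ≤ 1 + ‖w‖ * ‖z‖ := by
  have := norm_sub_le (1 : ℂ) ((starRingEnd ℂ) w * z)
  simpa [norm_mul] using this

lemma lintegral_image_deriv {s : Set ℝ} {F F' : ℝ → ℝ}
    (hs : MeasurableSet s) (hF : ∀ x ∈ s, HasDerivWithinAt F (F' x) s x)
    (hinj : Set.InjOn F s) (g : ℝ → ENNReal) :
    ∫⁻ x in F '' s, g x = ∫⁻ x in s, ENNReal.ofReal |F' x| * g (F x) := by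
  simpa only [ContinuousLinearMap.det_toSpanSingleton] using
    MeasureTheory.lintegral_image_eq_lintegral_abs_det_fderiv_mul volume hs
      (fun x hx => (hF x hx).hasFDerivWithinAt) hinj g

/-- The one-box condition `μ(S(I)) ≤ C φ(|I|)` for small arcs, with `φ` increasing,
positive and `∫₀^{2π} φ(x)/x dx < ∞`, implies
`sup_{w ∈ 𝔻} ∫_𝔻 log(2/|1 - w̄z|) dμ(z) < ∞`. -/
theorem statement7 (μ : Measure ℂ) [IsFiniteMeasure μ]
    (hμsupp : μ (Metric.ball (0:ℂ) 1)ᶜ = 0)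
    (φ : ℝ → ℝ)
    (hφpos : ∀ x ∈ Set.Ioc (0:ℝ) (2 * Real.pi), 0 < φ x)
    (hφmono : MonotoneOn φ (Set.Ioc (0:ℝ) (2 * Real.pi)))
    (hφint : ∫⁻ x in Set.Ioc (0:ℝ) (2 * Real.pi), ENNReal.ofReal (φ x / x) < ⊤)
    (C ε : ℝ) (hC : 0 < C) (hε : 0 < ε) (hε' : ε ≤ 2 * Real.pi)
    (hbox : ∀ θ ℓ : ℝ, 0 < ℓ → ℓ < ε →
      μ (carlesonBox θ ℓ) ≤ ENNReal.ofReal (C * φ ℓ)) :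
    ∃ M : ℝ, ∀ w ∈ Metric.ball (0:ℂ) 1,
      (∫⁻ z in Metric.ball (0:ℂ) 1,
          ENNReal.ofReal (Real.log (2 / ‖1 - (starRingEnd ℂ) w * z‖)) ∂μ) ≤
        ENNReal.ofReal M := by
  classical
  obtain ⟨T, hTgt, hT0⟩ : ∃ T : ℝ, Real.log (40/ε) < T ∧ 0 < T :=
    ⟨max (Real.log (40/ε)) 0 + 1,
      by have := le_max_left (Real.log (40/ε)) 0; linarith,
      by have := le_max_right (Real.log (40/ε)) 0; linarith⟩
  have hTtail : ∀ t : ℝ, T ≤ t → 40 * Real.exp (-t) < ε := by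
    intro t ht
    have h2 : Real.exp (-t) < Real.exp (-(Real.log (40/ε))) :=
      Real.exp_lt_exp.mpr (by linarith)
    have h3 : Real.exp (-(Real.log (40/ε))) = ε / 40 := by
      rw [Real.exp_neg, Real.exp_log (by positivity), inv_div]
    rw [h3] at h2; linarith
  have hAε : 40 * Real.exp (-T) < ε := hTtail T le_rfl
  set K := ∫⁻ x in Set.Ioc (0:ℝ) (2 * Real.pi), ENNReal.ofReal (φ x / x) with hK
  set B := μ Set.univ * ENNReal.ofReal T + ENNReal.ofReal C * K
      + ENNReal.ofReal (Real.log 4) * μ Set.univ with hB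
  have hBne : B ≠ ⊤ := by
    refine ENNReal.add_ne_top.mpr ⟨ENNReal.add_ne_top.mpr ⟨?_, ?_⟩, ?_⟩
    · exact ENNReal.mul_ne_top (measure_ne_top μ _) ENNReal.ofReal_ne_top
    · exact ENNReal.mul_ne_top ENNReal.ofReal_ne_top hφint.ne
    · exact ENNReal.mul_ne_top ENNReal.ofReal_ne_top (measure_ne_top μ _)
  refine ⟨B.toReal, ?_⟩
  intro w hw
  rw [Metric.mem_ball, dist_zero_right] at hw
  rw [ENNReal.ofReal_toReal hBne]
  have hfm : Measurable (fun z : ℂ => Real.log (2 / ‖1 - (starRingEnd ℂ) w * z‖)) := by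
    apply Real.measurable_log.comp
    exact Measurable.div measurable_const
      ((measurable_const.sub (measurable_const.mul measurable_id)).norm)
  by_cases hw2 : ‖w‖ ≤ 1/2
  · -- small w : integrand bounded by log 4
    have le1 : (∫⁻ z in Metric.ball (0:ℂ) 1,
        ENNReal.ofReal (Real.log (2 / ‖1 - (starRingEnd ℂ) w * z‖)) ∂μ) ≤
        ∫⁻ _ in Metric.ball (0:ℂ) 1, ENNReal.ofReal (Real.log 4) ∂μ := by
      apply setLIntegral_mono' measurableSet_ball
      intro z hz
      rw [Metric.mem_ball, dist_zero_right] at hz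
      have hge := norm_one_sub_ge w z
      have hz0 : (0:ℝ) ≤ ‖z‖ := norm_nonneg z
      have hs0 : (1:ℝ)/2 ≤ ‖1 - (starRingEnd ℂ) w * z‖ := by nlinarith
      apply ENNReal.ofReal_le_ofReal
      apply Real.log_le_log (by positivity)
      rw [div_le_iff₀ (by linarith)]; linarith
    calc (∫⁻ z in Metric.ball (0:ℂ) 1,
        ENNReal.ofReal (Real.log (2 / ‖1 - (starRingEnd ℂ) w * z‖)) ∂μ)
        ≤ ∫⁻ _ in Metric.ball (0:ℂ) 1, ENNReal.ofReal (Real.log 4) ∂μ := le1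
      _ = ENNReal.ofReal (Real.log 4) * μ (Metric.ball (0:ℂ) 1) := setLIntegral_const _ _
      _ ≤ ENNReal.ofReal (Real.log 4) * μ Set.univ :=
          mul_le_mul_right (measure_mono (Set.subset_univ _)) _
      _ ≤ B := le_add_self
  · push_neg at hw2
    -- layer cake
    have nn : 0 ≤ᵐ[μ.restrict (Metric.ball (0:ℂ) 1)]
        fun z : ℂ => Real.log (2 / ‖1 - (starRingEnd ℂ) w * z‖) := by
      rw [EventuallyLE, ae_restrict_iff' measurableSet_ball]
      apply ae_of_all
      intro z hz
      rw [Metric.mem_ball, dist_zero_right] at hz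
      have hge := norm_one_sub_ge w z
      have hle := norm_one_sub_le w z
      have hz0 : (0:ℝ) ≤ ‖z‖ := norm_nonneg z
      have hw0 : (0:ℝ) ≤ ‖w‖ := norm_nonneg w
      apply Real.log_nonneg
      rw [le_div_iff₀ (by nlinarith)]
      nlinarith
    rw [lintegral_eq_lintegral_meas_lt (μ.restrict (Metric.ball (0:ℂ) 1)) nn
      hfm.aemeasurable]
    rw [← Set.Ioc_union_Ioi_eq_Ioi hT0.le,
      lintegral_union measurableSet_Ioi (Set.Ioc_disjoint_Ioi le_rfl)]
    have head : (∫⁻ t in Set.Ioc 0 T, (μ.restrict (Metric.ball (0:ℂ) 1))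
        {z : ℂ | t < Real.log (2 / ‖1 - (starRingEnd ℂ) w * z‖)}) ≤
        μ Set.univ * ENNReal.ofReal T := by
      calc (∫⁻ t in Set.Ioc 0 T, (μ.restrict (Metric.ball (0:ℂ) 1))
          {z : ℂ | t < Real.log (2 / ‖1 - (starRingEnd ℂ) w * z‖)})
          ≤ ∫⁻ _ in Set.Ioc 0 T, μ Set.univ := by
            apply setLIntegral_mono' measurableSet_Ioc
            intro t _
            exact le_trans (Measure.restrict_le_self _)
              (measure_mono (Set.subset_univ _))
        _ = μ Set.univ * ENNReal.ofReal T := by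
            rw [setLIntegral_const, Real.volume_Ioc, sub_zero]
    have tail : (∫⁻ t in Set.Ioi T, (μ.restrict (Metric.ball (0:ℂ) 1))
        {z : ℂ | t < Real.log (2 / ‖1 - (starRingEnd ℂ) w * z‖)}) ≤
        ENNReal.ofReal C * K := by
      have step1 : ∀ t ∈ Set.Ioi T, (μ.restrict (Metric.ball (0:ℂ) 1))
          {z : ℂ | t < Real.log (2 / ‖1 - (starRingEnd ℂ) w * z‖)} ≤
          ENNReal.ofReal (C * φ (40 * Real.exp (-t))) := by
        intro t ht
        rw [Set.mem_Ioi] at ht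
        rw [Measure.restrict_apply (measurableSet_lt measurable_const hfm)]
        set δ := 2 * Real.exp (-t) with hδ
        have hδ0 : (0:ℝ) < δ := by positivity
        have hsub : {z : ℂ | t < Real.log (2 / ‖1 - (starRingEnd ℂ) w * z‖)} ∩
            Metric.ball (0:ℂ) 1 ⊆ carlesonBox (Complex.arg w - 10*δ) (20*δ) := by
          intro z hz
          apply geom_subset w hw hw2 hδ0
          refine ⟨?_, hz.2⟩
          have hz2 := hz.2
          rw [Metric.mem_ball, dist_zero_right] at hz2
          have hge := norm_one_sub_ge w z
          have hz0 : (0:ℝ) ≤ ‖z‖ := norm_nonneg z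
          have hs0 : (0:ℝ) < ‖1 - (starRingEnd ℂ) w * z‖ := by nlinarith
          have h1 := hz.1
          rw [Set.mem_setOf_eq] at h1 ⊢
          have h2 : Real.exp t < 2 / ‖1 - (starRingEnd ℂ) w * z‖ :=
            (Real.lt_log_iff_exp_lt (by positivity)).mp h1
          rw [lt_div_iff₀ hs0] at h2
          have h3 : ‖1 - (starRingEnd ℂ) w * z‖ < 2 / Real.exp t := by
            rw [lt_div_iff₀ (Real.exp_pos t)]; linarith
          rw [hδ, Real.exp_neg]
          rw [div_eq_mul_inv] at h3; exact h3
        calc μ ({z : ℂ | t < Real.log (2 / ‖1 - (starRingEnd ℂ) w * z‖)} ∩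
              Metric.ball (0:ℂ) 1)
            ≤ μ (carlesonBox (Complex.arg w - 10*δ) (20*δ)) := measure_mono hsub
          _ ≤ ENNReal.ofReal (C * φ (20*δ)) := by
              apply hbox _ _ (by positivity)
              have : 20 * δ = 40 * Real.exp (-t) := by rw [hδ]; ring
              rw [this]; exact hTtail t ht.le
          _ = ENNReal.ofReal (C * φ (40 * Real.exp (-t))) := by
              congr 2
              rw [hδ]; ring
      have hF : ∀ t ∈ Set.Ioi T, HasDerivWithinAt (fun t : ℝ => 40 * Real.exp (-t))
          (-(40 * Real.exp (-t))) (Set.Ioi T) t := by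
        intro t _
        have h2 : HasDerivAt (fun t : ℝ => Real.exp (-t)) (Real.exp (-t) * (-1)) t :=
          (Real.hasDerivAt_exp (-t)).comp t (hasDerivAt_neg t)
        have h3 := h2.const_mul (40:ℝ)
        have h4 : HasDerivAt (fun t : ℝ => 40 * Real.exp (-t)) (-(40 * Real.exp (-t))) t := by
          rw [show -(40 * Real.exp (-t)) = 40 * (Real.exp (-t) * -1) by ring]; exact h3
        exact h4.hasDerivWithinAt
      have hinj : Set.InjOn (fun t : ℝ => 40 * Real.exp (-t)) (Set.Ioi T) := by
        intro a _ b _ h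
        simp only at h
        have : Real.exp (-a) = Real.exp (-b) := by linarith
        have := Real.exp_injective this
        linarith
      have himg : (fun t : ℝ => 40 * Real.exp (-t)) '' (Set.Ioi T) = Set.Ioo 0 (40 * Real.exp (-T)) := by
        ext x
        simp only [Set.mem_image, Set.mem_Ioi, Set.mem_Ioo]
        constructor
        · rintro ⟨t, ht, rfl⟩
          refine ⟨by positivity, ?_⟩
          have := Real.exp_lt_exp.mpr (show -t < -T by linarith)
          nlinarith
        · rintro ⟨hx0, hx1⟩
          refine ⟨-Real.log (x/40), ?_, ?_⟩
          · have hlt : Real.log (x/40) < -T := by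
              rw [Real.log_lt_iff_lt_exp (by positivity)]
              rw [div_lt_iff₀ (by norm_num : (0:ℝ) < 40)]
              linarith
            linarith
          · simp only [neg_neg]
            rw [Real.exp_log (by positivity)]
            ring
      have changevar : (∫⁻ t in Set.Ioi T, ENNReal.ofReal (φ (40 * Real.exp (-t)))) =
          ∫⁻ x in Set.Ioo 0 (40 * Real.exp (-T)), ENNReal.ofReal (φ x / x) := by
        have key := lintegral_image_deriv measurableSet_Ioi hF hinj
          (fun x => ENNReal.ofReal (φ x / x))
        rw [himg] at key
        rw [key]
        apply setLIntegral_congr_fun measurableSet_Ioi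
        intro t _
        beta_reduce
        rw [abs_neg, abs_of_pos (by positivity), ← ENNReal.ofReal_mul (by positivity)]
        congr 1
        have h40 : (40:ℝ) * Real.exp (-t) ≠ 0 := by positivity
        field_simp
      calc (∫⁻ t in Set.Ioi T, (μ.restrict (Metric.ball (0:ℂ) 1))
          {z : ℂ | t < Real.log (2 / ‖1 - (starRingEnd ℂ) w * z‖)})
          ≤ ∫⁻ t in Set.Ioi T, ENNReal.ofReal (C * φ (40 * Real.exp (-t))) :=
            setLIntegral_mono' measurableSet_Ioi step1
        _ = ∫⁻ t in Set.Ioi T, ENNReal.ofReal C * ENNReal.ofReal (φ (40 * Real.exp (-t))) := by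
            simp_rw [ENNReal.ofReal_mul hC.le]
        _ = ENNReal.ofReal C * ∫⁻ t in Set.Ioi T, ENNReal.ofReal (φ (40 * Real.exp (-t))) :=
            lintegral_const_mul' _ _ ENNReal.ofReal_ne_top
        _ = ENNReal.ofReal C * ∫⁻ x in Set.Ioo 0 (40 * Real.exp (-T)), ENNReal.ofReal (φ x / x) := by
            rw [changevar]
        _ ≤ ENNReal.ofReal C * K := by
            apply mul_le_mul_right
            apply lintegral_mono_set
            intro x hx
            exact ⟨hx.1, le_of_lt (lt_of_lt_of_le hx.2 (le_of_lt (lt_of_lt_of_le hAε hε')))⟩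
    calc _ ≤ μ Set.univ * ENNReal.ofReal T + ENNReal.ofReal C * K := add_le_add head tail
      _ ≤ B := le_self_add

end
end

section
/- Let w ∈ ℂ with 1/2 < |w| < 1 and let t > 0 with 8t ≤ 2π. Then there exists an arc I of the unit circle with arclength |I| = 8t such that {z ∈ 𝔻 : |1 − w̄z| ≤ t} ⊆ S(I). -/
open MeasureTheory Metric Complex Filter Set

noncomputable section

/-- For `1/2 < |w| < 1` and `0 < t` with `8t ≤ 2π`, the set `{z ∈ 𝔻 : |1 - w̄z| ≤ t}`
is contained in the Carleson box of some arc of arclength `8t`. -/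
theorem statement9 (w : ℂ) (hw1 : 1 / 2 < ‖w‖) (hw2 : ‖w‖ < 1)
    (t : ℝ) (ht : 0 < t) (ht' : 8 * t ≤ 2 * Real.pi) :
    ∃ θ : ℝ, {z : ℂ | ‖z‖ < 1 ∧ ‖1 - (starRingEnd ℂ) w * z‖ ≤ t} ⊆
      carlesonBox θ (8 * t) := by
  have hpi : Real.pi < 3.15 := Real.pi_lt_d2
  refine ⟨Complex.arg w - 4 * t, ?_⟩
  rintro z ⟨hz1, hz2⟩
  set u := (starRingEnd ℂ) w * z with hu
  have hwpos : (0:ℝ) < ‖w‖ := lt_trans (by norm_num) hw1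
  have hnu : ‖u‖ = ‖w‖ * ‖z‖ := by
    rw [hu, norm_mul, RingHomIsometric.norm_map]
  have htle : t ≤ Real.pi / 4 := by linarith
  have ht1 : t < 1 := by linarith
  have hre : 1 - t ≤ u.re := by
    have h1 : |(1 - u).re| ≤ ‖1 - u‖ := Complex.abs_re_le_norm _
    have h2 : |1 - u.re| ≤ t := by
      simpa using h1.trans hz2
    linarith [(abs_le.mp h2).2]
  have him : |u.im| ≤ t := by
    have h1 : |(1 - u).im| ≤ ‖1 - u‖ := Complex.abs_im_le_norm _
    have h2 : |(0:ℝ) - u.im| ≤ t := by simpa using h1.trans hz2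
    simpa using h2
  have hrepos : 0 < u.re := by linarith
  have hnu1 : 1 - t ≤ ‖u‖ := by
    have h := norm_sub_norm_le (1:ℂ) u
    have h1 : ‖(1:ℂ)‖ = 1 := norm_one
    have := h.trans hz2
    linarith
  have hnz : 1 - 8 * t < ‖z‖ := by
    have hle : ‖u‖ ≤ ‖z‖ := by
      rw [hnu]; nlinarith [norm_nonneg z]
    linarith
  -- angle bound
  have hargpi2 : |Complex.arg u| < Real.pi / 2 := by
    rw [Complex.abs_arg_lt_pi_div_two_iff]; left; exact hrepos
  have harg : |Complex.arg u| ≤ 4 * t := by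
    rcases le_or_gt (Real.pi / 8) t with h | h
    · linarith
    · rcases eq_or_ne (Complex.arg u) 0 with h0 | h0
      · rw [h0]; simp; positivity
      · have hune0 : u ≠ 0 := fun hc => by simp [hc] at hrepos
        have htan : Real.tan |Complex.arg u| = |u.im| / u.re := by
          rcases abs_cases (Complex.arg u) with ⟨he, hs⟩ | ⟨he, hs⟩
          · have him0 : 0 ≤ u.im := (Complex.arg_nonneg_iff).mp hs
            rw [he, Complex.tan_arg, _root_.abs_of_nonneg him0]
          · have him0 : u.im < 0 := Complex.arg_neg_iff.mp hs
            rw [he, Real.tan_neg, Complex.tan_arg, abs_of_neg him0]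
            field_simp
        have hlt : |Complex.arg u| < Real.tan |Complex.arg u| := by
          apply Real.lt_tan _ hargpi2
          exact abs_pos.mpr h0
        have hb : |u.im| / u.re ≤ t / (1 - t) := by
          apply div_le_div₀ ht.le him (by linarith) (by linarith)
        have hb2 : t / (1 - t) ≤ 4 * t := by
          rw [div_le_iff₀ (by linarith)]
          nlinarith
        linarith [htan ▸ hlt]
  -- construct membership
  have hu' : (‖u‖ : ℂ) * Complex.exp (Complex.arg u * Complex.I) = u :=
    Complex.norm_mul_exp_arg_mul_I u
  have hw' : (‖w‖ : ℂ) * Complex.exp (Complex.arg w * Complex.I) = w :=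
    Complex.norm_mul_exp_arg_mul_I w
  refine ⟨‖z‖, Complex.arg w + Complex.arg u, hnz, hz1, ?_, ?_, ?_⟩
  · have := (abs_le.mp harg).1; linarith
  · have := (abs_le.mp harg).2; linarith
  · have hnormSq : w * (starRingEnd ℂ) w = ((‖w‖:ℝ) : ℂ) ^ 2 := by
      rw [Complex.mul_conj, Complex.normSq_eq_norm_sq]
      push_cast; ring
    have habs : (‖u‖ : ℂ) = (‖w‖ : ℂ) * (‖z‖ : ℂ) := by
      exact_mod_cast hnu
    rw [Complex.ofReal_add, add_mul, Complex.exp_add]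
    have hwne : ((‖w‖:ℝ):ℂ) ≠ 0 := by exact_mod_cast hwpos.ne'
    have hexpw : Complex.exp (Complex.arg w * Complex.I) = w / ‖w‖ := by
      rw [eq_div_iff hwne, mul_comm]
      exact_mod_cast hw'
    have hune : ((‖u‖ :ℝ):ℂ) ≠ 0 := by
      rw [habs]
      apply mul_ne_zero hwne
      intro hc
      have : ‖z‖ = 0 := by exact_mod_cast hc
      have : (1:ℝ) - t ≤ 0 := by
        rw [hnu] at hnu1; nlinarith
      linarith
    have hexpu : Complex.exp (Complex.arg u * Complex.I) = u / ‖u‖ := by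
      rw [eq_div_iff hune, mul_comm]; exact hu'
    have hzne : ((‖z‖:ℝ):ℂ) ≠ 0 := by
      have : (0:ℝ) < ‖z‖ := by nlinarith [hnu1, hnu, norm_nonneg z]
      exact_mod_cast this.ne'
    rw [hexpw, hexpu, hu, habs]
    field_simp [hwne, hzne]
    have habsz : ((‖z‖ : ℝ) : ℂ) ≠ 0 := hzne
    have habsw : ((‖w‖ : ℝ) : ℂ) ≠ 0 := hwne
    have hns' : w * (starRingEnd ℂ) w = ((‖w‖ : ℝ) : ℂ) ^ 2 := by
      rw [hnormSq]
    linear_combination (-z) * hns'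


end
end

section
/- Let φ : (0, 1] → (0, ∞) be an increasing function and let (l_n)_{n≥0} be a decreasing sequence in (0, 1] with φ(l_n) = 2^{−n} for all n ≥ 0. If ∫₀^{l₀} φ(x)/x dx = ∞, then Σ_{n≥0} 2^{−n} log(1/l_n) = ∞. -/
/-!
Cut `(0, l₀]` at the points `l_n`. On `(l_{n+1}, l_n]` monotonicity gives `φ(x) ≤ φ(l_n) = 2^{-n}`,
so that piece contributes at most `2^{-n} log(l_n / l_{n+1})`; points lying below every `l_n`
have `φ(x) ≤ 0` and contribute nothing. Summation by parts turns `Σ 2^{-n} log(l_n / l_{n+1})`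
into a combination of shifted copies of `Σ 2^{-n} log(1 / l_n)`, so convergence of the latter
would make the integral finite.
-/

open MeasureTheory Filter Set Topology

lemma lintegral_Ioc_ofReal_div {c a b : ℝ} (hc : 0 ≤ c) (ha : 0 < a) (hab : a ≤ b) :
    ∫⁻ x in Ioc a b, ENNReal.ofReal (c / x) = ENNReal.ofReal (c * Real.log (b / a)) := by
  have hpos : ∀ x ∈ Icc a b, 0 < x := fun x hx => ha.trans_le hx.1
  have hint : IntegrableOn (fun x => c / x) (Ioc a b) :=
    (ContinuousOn.integrableOn_Icc (continuousOn_const.div continuousOn_id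
      fun x hx => (hpos x hx).ne')).mono_set Ioc_subset_Icc_self
  have hnonneg : 0 ≤ᵐ[volume.restrict (Ioc a b)] fun x => c / x :=
    (ae_restrict_iff' measurableSet_Ioc).2 <| ae_of_all _ fun x hx =>
      div_nonneg hc (hpos x (Ioc_subset_Icc_self hx)).le
  rw [← ofReal_integral_eq_lintegral_ofReal hint hnonneg, ← intervalIntegral.integral_of_le hab]
  simp only [div_eq_mul_inv c, intervalIntegral.integral_const_mul,
    integral_inv_of_pos ha (ha.trans_le hab)]

lemma forall_le_of_forall_notMem_Ioc {l : ℕ → ℝ} {x : ℝ} (h0 : x ≤ l 0)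
    (h : ∀ n, x ∉ Ioc (l (n + 1)) (l n)) (n : ℕ) : x ≤ l n := by
  induction n with
  | zero => exact h0
  | succ n ih => exact not_lt.1 fun hlt => h n ⟨hlt, ih⟩

section

variable {φ : ℝ → ℝ} {l w : ℕ → ℝ}

lemma ofReal_div_le_tsum_indicator (hφ : MonotoneOn φ (Ioc 0 (l 0)))
    (hl : ∀ n, l n ∈ Ioc 0 (l 0)) (hw : Tendsto w atTop (𝓝 0)) (hφl : ∀ n, φ (l n) ≤ w n)
    {x : ℝ} (hx : x ∈ Ioc 0 (l 0)) :
    ENNReal.ofReal (φ x / x) ≤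
      ∑' n, (Ioc (l (n + 1)) (l n)).indicator (fun y => ENNReal.ofReal (w n / y)) x := by
  by_cases hcov : ∃ n, x ∈ Ioc (l (n + 1)) (l n)
  · obtain ⟨n, hn⟩ := hcov
    refine le_trans ?_ (ENNReal.le_tsum n)
    rw [indicator_of_mem hn]
    gcongr
    · exact hx.1.le
    · exact (hφ hx (hl n) hn.2).trans (hφl n)
  · have hle : ∀ n, x ≤ l n := forall_le_of_forall_notMem_Ioc hx.2 (not_exists.1 hcov)
    have hφx : φ x ≤ 0 :=
      ge_of_tendsto' hw fun n => (hφ hx (hl n) (hle n)).trans (hφl n)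
    rw [ENNReal.ofReal_of_nonpos (div_nonpos_of_nonpos_of_nonneg hφx hx.1.le)]
    exact bot_le

lemma lintegral_ofReal_div_le_tsum (hφ : MonotoneOn φ (Ioc 0 (l 0)))
    (hl : ∀ n, l n ∈ Ioc 0 (l 0)) (hanti : Antitone l) (hw0 : ∀ n, 0 ≤ w n)
    (hw : Tendsto w atTop (𝓝 0)) (hφl : ∀ n, φ (l n) ≤ w n) :
    ∫⁻ x in Ioc 0 (l 0), ENNReal.ofReal (φ x / x) ≤
      ∑' n, ENNReal.ofReal (w n * Real.log (l n / l (n + 1))) := calc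
  _ ≤ ∫⁻ x in Ioc 0 (l 0),
        ∑' n, (Ioc (l (n + 1)) (l n)).indicator (fun y => ENNReal.ofReal (w n / y)) x :=
      setLIntegral_mono' measurableSet_Ioc fun x hx =>
        ofReal_div_le_tsum_indicator hφ hl hw hφl hx
  _ ≤ ∫⁻ x, ∑' n, (Ioc (l (n + 1)) (l n)).indicator (fun y => ENNReal.ofReal (w n / y)) x :=
      setLIntegral_le_lintegral _ _
  _ = ∑' n, ENNReal.ofReal (w n * Real.log (l n / l (n + 1))) := by
      rw [lintegral_tsum fun n => ((by fun_prop : Measurable fun y => ENNReal.ofReal (w n / y)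
        ).indicator measurableSet_Ioc).aemeasurable]
      congr 1 with n
      rw [lintegral_indicator measurableSet_Ioc,
        lintegral_Ioc_ofReal_div (hw0 n) (hl (n + 1)).1 (hanti n.le_succ)]

end

lemma summable_pow_mul_sub_of_summable {r : ℝ} (hr : r ≠ 0) {a : ℕ → ℝ}
    (h : Summable fun n => r ^ n * a n) : Summable fun n => r ^ n * (a (n + 1) - a n) := by
  have hshift : Summable fun n => r ^ (n + 1) * a (n + 1) := (summable_nat_add_iff 1).2 h
  refine ((hshift.mul_left r⁻¹).sub h).congr fun n => ?_
  rw [pow_succ]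
  field_simp

theorem statement12_general (φ : ℝ → ℝ)
    (hφmono : MonotoneOn φ (Set.Ioc (0:ℝ) 1))
    (l : ℕ → ℝ) (hl : ∀ n, l n ∈ Set.Ioc (0:ℝ) 1) (hldec : Antitone l)
    (hφl : ∀ n, φ (l n) = (1 / 2 : ℝ) ^ n)
    (hint : ∫⁻ x in Set.Ioc (0:ℝ) (l 0), ENNReal.ofReal (φ x / x) = ⊤) :
    ¬ Summable fun n => (1 / 2 : ℝ) ^ n * Real.log (1 / l n) := by
  intro hsum
  have hl' : ∀ n, l n ∈ Ioc 0 (l 0) := fun n => ⟨(hl n).1, hldec n.zero_le⟩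
  have hbound := lintegral_ofReal_div_le_tsum (hφmono.mono (Ioc_subset_Ioc_right (hl 0).2)) hl'
    hldec (fun n => by positivity) (tendsto_pow_atTop_nhds_zero_of_lt_one (by norm_num)
      (by norm_num)) fun n => (hφl n).le
  have hnonneg : ∀ n, 0 ≤ (1 / 2 : ℝ) ^ n * Real.log (l n / l (n + 1)) := fun n =>
    mul_nonneg (by positivity)
      (Real.log_nonneg ((one_le_div (hl (n + 1)).1).2 (hldec n.le_succ)))
  have hsum' : Summable fun n => (1 / 2 : ℝ) ^ n * Real.log (l n / l (n + 1)) := by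
    refine (summable_pow_mul_sub_of_summable (by norm_num) hsum).congr fun n => ?_
    rw [Real.log_div (hl n).1.ne' (hl (n + 1)).1.ne', one_div (l n), one_div (l (n + 1)),
      Real.log_inv, Real.log_inv]
    ring
  rw [← ENNReal.ofReal_tsum_of_nonneg hnonneg hsum', hint] at hbound
  exact ENNReal.ofReal_ne_top (top_le_iff.1 hbound)

/-- If `φ : (0,1] → (0,∞)` is increasing, `(l_n)` is a decreasing sequence in `(0,1]` with
`φ(l_n) = 2^{-n}`, and `∫₀^{l₀} φ(x)/x dx = ∞`, then `Σ 2^{-n} log(1/l_n) = ∞`. -/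
theorem statement12 (φ : ℝ → ℝ)
    (hφpos : ∀ x ∈ Set.Ioc (0:ℝ) 1, 0 < φ x)
    (hφmono : MonotoneOn φ (Set.Ioc (0:ℝ) 1))
    (l : ℕ → ℝ) (hl : ∀ n, l n ∈ Set.Ioc (0:ℝ) 1) (hldec : Antitone l)
    (hφl : ∀ n, φ (l n) = (1 / 2 : ℝ) ^ n)
    (hint : ∫⁻ x in Set.Ioc (0:ℝ) (l 0), ENNReal.ofReal (φ x / x) = ⊤) :
    ¬ Summable fun n => (1 / 2 : ℝ) ^ n * Real.log (1 / l n) :=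
  statement12_general φ hφmono l hl hldec hφl hint
end

section
/- Let (l_n)_{n≥0} be a sequence of positive reals with l_{n+1} < l_n/2 for all n, and let E be the generalized Cantor set in the unit circle built from these lengths: start with a closed arc of length l₀; at stage n there are 2ⁿ pairwise disjoint closed arcs each of length l_n, and each stage-n arc contains exactly two stage-(n+1) arcs of length l_{n+1}, one at each end of it (obtained by removing an open arc from its center); E is the intersection over n of the unions of the stage-n arcs. Let σ be the Cantor–Lebesgue probability measure on E, i.e., the probability measure assigning mass 2^{−n} to each stage-n arc. Let φ be an increasing function with φ(l_n) = 2^{−n} for all n. Then for every arc I of the unit circle with |I| < l₀, σ(I) ≤ 4·φ(|I|). -/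
/-!
Choose `m` with `l (m + 1) ≤ ℓ < l m`. The measure `σ` is carried by the union of the stage-`m`
arcs. An arc of length `l m` meeting an arc `I` of length `ℓ` must contain an endpoint of `I`, and
distinct stage-`m` arcs meet at most in the `σ`-null point `1`; so after enlarging `I` slightly to
move its endpoints off `1`, it is covered `σ`-a.e. by at most two stage-`m` arcs. Hence
`σ I ≤ 2 · 2⁻ᵐ = 4 φ (l (m + 1)) ≤ 4 φ ℓ`.
-/

open MeasureTheory Complex Set

noncomputable section

def circleArc (θ ℓ : ℝ) : Set ℂ :=
  (fun α : ℝ => Complex.exp (α * Complex.I)) '' Set.Icc θ (θ + ℓ)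

def cantorLeft (l : ℕ → ℝ) : List Bool → ℝ
  | [] => 0
  | b :: s => cantorLeft l s + if b then l s.length - l (s.length + 1) else 0

def cantorArc (l : ℕ → ℝ) (s : List Bool) : Set ℂ :=
  circleArc (cantorLeft l s) (l s.length)

lemma exists_le_of_lt_half {u : ℕ → ℝ} (hu : ∀ n, u (n + 1) < u n / 2) {ε : ℝ} (hε : 0 < ε) :
    ∃ n, u n ≤ ε := by
  have hgeom (n : ℕ) : u n ≤ u 0 * (1 / 2) ^ n := by
    induction n with
    | zero => simp
    | succ n ih => rw [pow_succ]; linarith [hu n]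
  have hlim : Filter.Tendsto (fun n => u 0 * (1 / 2 : ℝ) ^ n) Filter.atTop (nhds 0) := by
    simpa using (tendsto_pow_atTop_nhds_zero_of_lt_one (r := (1 / 2 : ℝ)) (by norm_num)
      (by norm_num)).const_mul (u 0)
  obtain ⟨n, hn⟩ := (hlim.eventually (gt_mem_nhds hε)).exists
  exact ⟨n, (hgeom n).trans hn.le⟩

lemma exists_succ_le_lt {u : ℕ → ℝ} {x : ℝ} (h0 : x < u 0) (h : ∃ n, u n ≤ x) :
    ∃ m, u (m + 1) ≤ x ∧ x < u m := by
  by_contra! hnone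
  obtain ⟨n, hn⟩ := h
  have hlt (k : ℕ) : x < u k := by
    induction k with
    | zero => exact h0
    | succ k ih => exact lt_of_not_ge fun hk => (hnone k hk).not_gt ih
  exact (hlt n).not_ge hn

lemma exp_mul_I_eq_exp_mul_I_iff {x y : ℝ} :
    exp (x * I) = exp (y * I) ↔ ∃ k : ℤ, x = y + 2 * Real.pi * k := by
  rw [exp_eq_exp_iff_exists_int]
  refine exists_congr fun k => ⟨fun h => ?_, fun h => by rw [h]; push_cast; ring⟩
  apply ofReal_injective
  apply mul_right_cancel₀ I_ne_zero
  push_cast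
  linear_combination h

lemma exp_mul_I_mem_circleArc_iff {θ ℓ x : ℝ} :
    exp (x * I) ∈ circleArc θ ℓ ↔ ∃ k : ℤ, x + 2 * Real.pi * k ∈ Icc θ (θ + ℓ) := by
  constructor
  · rintro ⟨α, hα, h⟩
    obtain ⟨k, rfl⟩ := exp_mul_I_eq_exp_mul_I_iff.mp h
    exact ⟨k, hα⟩
  · rintro ⟨k, hk⟩
    exact ⟨_, hk, exp_mul_I_eq_exp_mul_I_iff.mpr ⟨k, rfl⟩⟩

lemma measurableSet_circleArc (θ ℓ : ℝ) : MeasurableSet (circleArc θ ℓ) :=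
  (isCompact_Icc.image (by fun_prop)).isClosed.measurableSet

lemma measurableSet_cantorArc (l : ℕ → ℝ) (s : List Bool) : MeasurableSet (cantorArc l s) :=
  measurableSet_circleArc _ _

lemma circleArc_subset_circleArc {θ ℓ α ℓ' : ℝ} (hα : α ≤ θ) (hℓ : θ + ℓ ≤ α + ℓ') :
    circleArc θ ℓ ⊆ circleArc α ℓ' :=
  image_mono (Icc_subset_Icc hα hℓ)

lemma exp_mul_I_eq_one_of_eq_of_ne {x y : ℝ} (hx : x ∈ Icc 0 (2 * Real.pi))
    (hy : y ∈ Icc 0 (2 * Real.pi)) (hne : x ≠ y) (heq : exp (x * I) = exp (y * I)) :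
    exp (x * I) = 1 := by
  obtain ⟨k, hk⟩ := exp_mul_I_eq_exp_mul_I_iff.mp heq
  have hπ := Real.pi_pos
  rcases lt_trichotomy k 0 with h | rfl | h
  · have hk1 : (k : ℝ) ≤ -1 := by exact_mod_cast Int.le_sub_one_of_lt h
    obtain rfl : x = 0 := le_antisymm (by nlinarith [hy.2]) hx.1
    simp
  · simp [hk] at hne
  · have hk1 : (1 : ℝ) ≤ k := by exact_mod_cast h
    obtain rfl : y = 0 := le_antisymm (by nlinarith [hx.2]) hy.1
    simp [heq]

lemma exists_mem_Ioo_exp_mul_I_ne_one {a b : ℝ} (hab : a < b) :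
    ∃ x ∈ Ioo a b, exp (x * I) ≠ 1 := by
  have hcount : {x : ℝ | exp (x * I) = 1}.Countable := by
    refine (countable_range fun k : ℤ => 2 * Real.pi * k).mono fun x hx => ?_
    obtain ⟨k, hk⟩ := exp_mul_I_eq_exp_mul_I_iff.mp (show exp (x * I) = exp ((0 : ℝ) * I) by
      simpa using hx)
    exact ⟨k, by simp [hk]⟩
  obtain ⟨x, hx, hxab⟩ := (hcount.dense_compl ℝ).exists_between hab
  exact ⟨x, hxab, hx⟩

lemma endpoint_mem_of_circleArc_inter_nonempty {a L θ ℓ : ℝ} (hL : ℓ ≤ L)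
    (h : (circleArc a L ∩ circleArc θ ℓ).Nonempty) :
    exp (θ * I) ∈ circleArc a L ∨ exp ((θ + ℓ : ℝ) * I) ∈ circleArc a L := by
  obtain ⟨z, ⟨x, hx, rfl⟩, ⟨y, hy, hyx⟩⟩ := h
  obtain ⟨k, hk⟩ := exp_mul_I_eq_exp_mul_I_iff.mp hyx.symm
  by_cases hc : a ≤ θ + 2 * Real.pi * k
  · exact .inl (exp_mul_I_mem_circleArc_iff.mpr ⟨k, hc, by linarith [hy.1, hx.2]⟩)
  · exact .inr (exp_mul_I_mem_circleArc_iff.mpr ⟨k, by linarith [hy.2, hx.1], by linarith⟩)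

def cantorInterval (l : ℕ → ℝ) (s : List Bool) : Set ℝ :=
  Icc (cantorLeft l s) (cantorLeft l s + l s.length)

lemma cantorArc_eq_image (l : ℕ → ℝ) (s : List Bool) :
    cantorArc l s = (fun α : ℝ => exp (α * I)) '' cantorInterval l s := rfl

lemma disjoint_cantorInterval_false_true {l : ℕ → ℝ} (hl : ∀ n, l (n + 1) < l n / 2)
    (s : List Bool) : Disjoint (cantorInterval l (false :: s)) (cantorInterval l (true :: s)) := by
  have := hl s.length
  rw [Set.disjoint_left]
  rintro x ⟨-, hx⟩ ⟨hx', -⟩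
  simp [cantorLeft] at hx hx'
  linarith

section Combinatorics

variable {l : ℕ → ℝ} (hlpos : ∀ n, 0 < l n) (hl : ∀ n, l (n + 1) < l n / 2)
include hlpos hl

lemma cantorInterval_cons_subset (b : Bool) (s : List Bool) :
    cantorInterval l (b :: s) ⊆ cantorInterval l s := by
  have := hl s.length
  have := hlpos s.length
  apply Icc_subset_Icc <;> cases b <;> simp [cantorLeft] <;> linarith

lemma cantorInterval_subset_Icc (s : List Bool) : cantorInterval l s ⊆ Icc 0 (l 0) := by
  induction s with
  | nil => simp [cantorInterval, cantorLeft]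
  | cons b s ih => exact (cantorInterval_cons_subset hlpos hl b s).trans ih

lemma disjoint_cantorInterval {s t : List Bool} (hlen : s.length = t.length) (hne : s ≠ t) :
    Disjoint (cantorInterval l s) (cantorInterval l t) := by
  induction s generalizing t with
  | nil => exact absurd (List.length_eq_zero_iff.mp hlen.symm).symm hne
  | cons b s ih =>
    obtain _ | ⟨c, t⟩ := t
    · simp at hlen
    by_cases hst : s = t
    · subst hst
      obtain rfl | rfl := b <;> obtain rfl | rfl := c
      · exact absurd rfl hne
      · exact disjoint_cantorInterval_false_true hl s
      · exact (disjoint_cantorInterval_false_true hl s).symm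
      · exact absurd rfl hne
    · exact (ih (Nat.succ_injective hlen) hst).mono (cantorInterval_cons_subset hlpos hl b s)
        (cantorInterval_cons_subset hlpos hl c t)

end Combinatorics

lemma cantorArc_inter_subset {l : ℕ → ℝ} (hlpos : ∀ n, 0 < l n)
    (hl : ∀ n, l (n + 1) < l n / 2) (hl0 : l 0 ≤ 2 * Real.pi) {s t : List Bool}
    (hlen : s.length = t.length) (hne : s ≠ t) : cantorArc l s ∩ cantorArc l t ⊆ {1} := by
  rintro _ ⟨⟨x, hx, rfl⟩, ⟨y, hy, hyx⟩⟩
  have hI : Icc 0 (l 0) ⊆ Icc 0 (2 * Real.pi) := Icc_subset_Icc_right hl0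
  have hxy : x ≠ y := by
    rintro rfl
    exact (disjoint_cantorInterval hlpos hl hlen hne).le_bot ⟨hx, hy⟩
  exact exp_mul_I_eq_one_of_eq_of_ne (hI (cantorInterval_subset_Icc hlpos hl s hx))
    (hI (cantorInterval_subset_Icc hlpos hl t hy)) hxy hyx.symm

lemma one_mem_cantorArc_replicate_false {l : ℕ → ℝ} (hlpos : ∀ n, 0 < l n) (n : ℕ) :
    (1 : ℂ) ∈ cantorArc l (List.replicate n false) := by
  have hleft : cantorLeft l (List.replicate n false) = 0 := by
    induction n with
    | zero => rfl
    | succ n ih => simpa [cantorLeft, List.replicate_succ] using ih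
  exact ⟨0, by simpa [hleft] using (hlpos n).le, by simp⟩

def cantorLevel (l : ℕ → ℝ) (m : ℕ) : Set ℂ :=
  ⋃ (s : List Bool) (_ : s.length = m), cantorArc l s

lemma measurableSet_cantorLevel (l : ℕ → ℝ) (m : ℕ) : MeasurableSet (cantorLevel l m) :=
  .iUnion fun _ => .iUnion fun _ => measurableSet_cantorArc l _

section Measure

variable {l : ℕ → ℝ} (hlpos : ∀ n, 0 < l n) (hl : ∀ n, l (n + 1) < l n / 2)
  (hl0 : l 0 ≤ 2 * Real.pi) {σ : Measure ℂ}
  (hσ : ∀ s : List Bool, σ (cantorArc l s) = ENNReal.ofReal ((1 / 2 : ℝ) ^ s.length))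
include hlpos hσ

lemma measure_singleton_one : σ {1} = 0 := by
  have hle (n : ℕ) : σ {1} ≤ ENNReal.ofReal ((1 / 2 : ℝ) ^ n) := by
    simpa [hσ] using measure_mono (μ := σ)
      (singleton_subset_iff.mpr (one_mem_cantorArc_replicate_false hlpos n))
  have hlim : Filter.Tendsto (fun n : ℕ => ENNReal.ofReal ((1 / 2 : ℝ) ^ n)) Filter.atTop
      (nhds 0) := by
    simpa using ENNReal.tendsto_ofReal
      (tendsto_pow_atTop_nhds_zero_of_lt_one (r := (1 / 2 : ℝ)) (by norm_num) (by norm_num))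
  exact nonpos_iff_eq_zero.mp (ge_of_tendsto' hlim hle)

include hl hl0

lemma measure_iUnion_cantorArc_mem_le {p : ℂ} (hp : p ≠ 1) (m : ℕ) :
    σ (⋃ (s : List Bool) (_ : s.length = m ∧ p ∈ cantorArc l s), cantorArc l s) ≤
      ENNReal.ofReal ((1 / 2 : ℝ) ^ m) := by
  by_cases hex : ∃ s : List Bool, s.length = m ∧ p ∈ cantorArc l s
  · obtain ⟨s₀, hlen₀, hp₀⟩ := hex
    refine (measure_mono (iUnion₂_subset fun s ⟨hlen, hps⟩ => ?_)).trans (by rw [hσ, hlen₀])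
    by_contra hne
    exact hp (cantorArc_inter_subset hlpos hl hl0 (hlen.trans hlen₀.symm)
      (fun h => hne (h ▸ subset_rfl)) ⟨hps, hp₀⟩)
  · rw [measure_mono_null (iUnion₂_subset fun s hs => (hex ⟨s, hs⟩).elim) (measure_empty (μ := σ))]
    exact zero_le

section Finite

variable [IsFiniteMeasure σ]

lemma measure_cantorArc_diff_children (s : List Bool) :
    σ (cantorArc l s \ (cantorArc l (false :: s) ∪ cantorArc l (true :: s))) = 0 := by
  have hinter : σ (cantorArc l (false :: s) ∩ cantorArc l (true :: s)) = 0 :=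
    measure_mono_null (cantorArc_inter_subset hlpos hl hl0 rfl (by simp))
      (measure_singleton_one hlpos hσ)
  have hunion : σ (cantorArc l (false :: s) ∪ cantorArc l (true :: s)) = σ (cantorArc l s) := by
    rw [← add_zero (σ (_ ∪ _)), ← hinter, measure_union_add_inter _ (measurableSet_cantorArc l _),
      hσ, hσ, hσ, ← ENNReal.ofReal_add (by positivity) (by positivity)]
    simp only [List.length_cons, pow_succ]
    ring_nf
  have hsub : cantorArc l (false :: s) ∪ cantorArc l (true :: s) ⊆ cantorArc l s := by
    simp only [cantorArc_eq_image]
    exact union_subset (image_mono (cantorInterval_cons_subset hlpos hl false s))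
      (image_mono (cantorInterval_cons_subset hlpos hl true s))
  rw [measure_sdiff hsub ((measurableSet_cantorArc l _).union
    (measurableSet_cantorArc l _)).nullMeasurableSet (measure_ne_top σ _), hunion, tsub_self]

lemma measure_cantorLevel_le_succ (m : ℕ) : σ (cantorLevel l m) ≤ σ (cantorLevel l (m + 1)) := by
  refine measure_mono_ae (ae_le_set.mpr (measure_mono_null ?_ (measure_iUnion_null
    (measure_cantorArc_diff_children hlpos hl hl0 hσ))))
  rintro x ⟨hx, hx'⟩
  obtain ⟨s, rfl, hxs⟩ := mem_iUnion₂.mp hx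
  refine mem_iUnion.mpr ⟨s, hxs, fun hchild => hx' ?_⟩
  obtain h | h := hchild
  · exact mem_iUnion₂.mpr ⟨false :: s, rfl, h⟩
  · exact mem_iUnion₂.mpr ⟨true :: s, rfl, h⟩

end Finite

variable [IsProbabilityMeasure σ]

lemma measure_compl_cantorLevel (m : ℕ) : σ (cantorLevel l m)ᶜ = 0 := by
  have hlevel : σ (cantorLevel l m) = 1 := by
    refine le_antisymm prob_le_one ?_
    calc (1 : ENNReal) = σ (cantorArc l []) := by simp [hσ]
      _ ≤ σ (cantorLevel l 0) := measure_mono (subset_biUnion_of_mem (u := cantorArc l) rfl)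
      _ ≤ σ (cantorLevel l m) := monotone_nat_of_le_succ
          (measure_cantorLevel_le_succ hlpos hl hl0 hσ) m.zero_le
  rw [measure_compl (measurableSet_cantorLevel l m) (measure_ne_top σ _), hlevel, measure_univ,
    tsub_self]

lemma measure_circleArc_le {m : ℕ} {θ ℓ : ℝ} (hℓ : ℓ < l m) :
    σ (circleArc θ ℓ) ≤ ENNReal.ofReal (2 * (1 / 2 : ℝ) ^ m) := by
  -- Enlarge the arc slightly so that neither endpoint is `1`, where distinct arcs may touch.
  obtain ⟨α, ⟨hα, hαθ⟩, hα1⟩ := exists_mem_Ioo_exp_mul_I_ne_one (a := θ - (l m - ℓ) / 2)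
    (b := θ) (by linarith)
  obtain ⟨β, ⟨hβ, hβθ⟩, hβ1⟩ := exists_mem_Ioo_exp_mul_I_ne_one (a := θ + ℓ)
    (b := θ + ℓ + (l m - ℓ) / 2) (by linarith)
  have hcover : circleArc α (β - α) ∩ cantorLevel l m ⊆
      (⋃ (s : List Bool) (_ : s.length = m ∧ exp (α * I) ∈ cantorArc l s), cantorArc l s) ∪
        ⋃ (s : List Bool) (_ : s.length = m ∧ exp (β * I) ∈ cantorArc l s), cantorArc l s := by
    rintro z ⟨hzI, hz⟩
    obtain ⟨s, rfl, hzs⟩ := mem_iUnion₂.mp hz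
    obtain h | h := endpoint_mem_of_circleArc_inter_nonempty (by linarith) ⟨z, hzs, hzI⟩
    · exact .inl (mem_iUnion₂.mpr ⟨s, ⟨rfl, h⟩, hzs⟩)
    · exact .inr (mem_iUnion₂.mpr ⟨s, ⟨rfl, by rwa [add_sub_cancel] at h⟩, hzs⟩)
  calc σ (circleArc θ ℓ) ≤ σ (circleArc α (β - α)) :=
        measure_mono (circleArc_subset_circleArc hαθ.le (by linarith))
    _ = σ (circleArc α (β - α) ∩ cantorLevel l m) :=
        (measure_inter_conull (measure_compl_cantorLevel hlpos hl hl0 hσ m)).symm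
    _ ≤ ENNReal.ofReal ((1 / 2 : ℝ) ^ m) + ENNReal.ofReal ((1 / 2 : ℝ) ^ m) :=
        (measure_mono hcover).trans ((measure_union_le _ _).trans (add_le_add
          (measure_iUnion_cantorArc_mem_le hlpos hl hl0 hσ hα1 m)
          (measure_iUnion_cantorArc_mem_le hlpos hl hl0 hσ hβ1 m)))
    _ = ENNReal.ofReal (2 * (1 / 2 : ℝ) ^ m) := by
        rw [← ENNReal.ofReal_add (by positivity) (by positivity), two_mul]

end Measure

/-- If `σ` is the Cantor–Lebesgue probability measure of the generalized Cantor set built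
from lengths `l_n` (with `l_{n+1} < l_n / 2`), i.e. `σ` gives mass `2^{-n}` to each
stage-`n` arc, and `φ` is increasing with `φ(l_n) = 2^{-n}`, then every arc `I` of the
unit circle with `|I| < l₀` satisfies `σ(I) ≤ 4 φ(|I|)`. -/
theorem statement14 (l : ℕ → ℝ) (hlpos : ∀ n, 0 < l n)
    (hl : ∀ n, l (n + 1) < l n / 2) (hl0 : l 0 ≤ 2 * Real.pi)
    (σ : Measure ℂ) [IsProbabilityMeasure σ]
    (hσ : ∀ s : List Bool, σ (cantorArc l s) = ENNReal.ofReal ((1 / 2 : ℝ) ^ s.length))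
    (φ : ℝ → ℝ)
    (hφmono : ∀ x y : ℝ, 0 < x → x ≤ y → y ≤ l 0 → φ x ≤ φ y)
    (hφl : ∀ n, φ (l n) = (1 / 2 : ℝ) ^ n) :
    ∀ θ ℓ : ℝ, 0 < ℓ → ℓ < l 0 → σ (circleArc θ ℓ) ≤ ENNReal.ofReal (4 * φ ℓ) := by
  intro θ ℓ hℓ hℓ0
  obtain ⟨m, hm, hm'⟩ := exists_succ_le_lt hℓ0 (exists_le_of_lt_half hl hℓ)
  have hφ : (1 / 2 : ℝ) ^ (m + 1) ≤ φ ℓ := hφl (m + 1) ▸ hφmono _ _ (hlpos _) hm hℓ0.le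
  calc σ (circleArc θ ℓ) ≤ ENNReal.ofReal (2 * (1 / 2 : ℝ) ^ m) :=
        measure_circleArc_le hlpos hl hl0 hσ hm'
    _ ≤ ENNReal.ofReal (4 * φ ℓ) := ENNReal.ofReal_le_ofReal (by rw [pow_succ] at hφ; linarith)

end
end

section
/- Let μ be the positive Borel measure supported on the radius [0, 1) ⊂ 𝔻 determined by μ([1 − t, 1)) = (log(2/t))^{−1} for all 0 < t ≤ 1. Then ∫_{[0,1)} log(2/(1 − w·t)) dμ(t) → ∞ as w → 1⁻ (w real, 0 < w < 1); in particular, sup over w ∈ 𝔻 of ∫_𝔻 log(2/|1 − w̄z|) dμ(z) = ∞, so the sufficient condition sup_{w∈𝔻} ∫_𝔻 log(2/|1 − w̄z|) dμ(z) < ∞ for being a Carleson measure for the Dirichlet space is not necessary. -/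
open MeasureTheory Metric Complex Filter Set

open ENNReal

noncomputable section

namespace Statement17Aux

def seg (t : ℝ) : Set ℂ := {z : ℂ | z.im = 0 ∧ 1 - t ≤ z.re ∧ z.re < 1}

lemma seg_eq (t : ℝ) :
    {z : ℂ | ∃ x : ℝ, 1 - t ≤ x ∧ x < 1 ∧ z = (x : ℂ)} = seg t := by
  ext z
  constructor
  · rintro ⟨x, h1, h2, rfl⟩
    exact ⟨Complex.ofReal_im x, by simpa using h1, by simpa using h2⟩
  · rintro ⟨him, h1, h2⟩
    exact ⟨z.re, h1, h2, (Complex.ext (by simp) (by simp [him])).symm⟩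

lemma seg_meas (t : ℝ) : MeasurableSet (seg t) := by
  have : seg t = Complex.im ⁻¹' {0} ∩ Complex.re ⁻¹' (Set.Ico (1 - t) 1) := by
    ext z; simp [seg, Set.mem_Ico, and_assoc]
  rw [this]
  exact (Complex.measurable_im (measurableSet_singleton 0)).inter
    (Complex.measurable_re measurableSet_Ico)

lemma seg_subset_ball {t : ℝ} (ht : t ≤ 1) : seg t ⊆ Metric.ball (0 : ℂ) 1 := by
  rintro z ⟨him, h1, h2⟩
  have hz : z = (z.re : ℂ) := (Complex.ext (by simp) (by simp [him])).symm
  have habs : |z.re| = z.re := abs_of_nonneg (by linarith)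
  rw [mem_ball_zero_iff, hz, Complex.norm_real, Real.norm_eq_abs, habs]
  exact h2

lemma seg_mono {t t' : ℝ} (h : t ≤ t') : seg t ⊆ seg t' := by
  rintro z ⟨him, h1, h2⟩
  exact ⟨him, by linarith, h2⟩

lemma log_bound {w : ℝ} (hw0 : 0 < w) (hw1 : w < 1) {m : ℕ} (hm : 1 ≤ m)
    {z : ℂ} (hz : z ∈ seg (Real.exp (-(m : ℝ))))
    (hwm : 1 - w ≤ Real.exp (-(m : ℝ))) :
    (m : ℝ) ≤ Real.log (2 / ‖1 - (w : ℂ) * z‖) := by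
  obtain ⟨him, h1, h2⟩ := hz
  set x := z.re with hx
  have hzx : z = (x : ℂ) := (Complex.ext (by simp [hx]) (by simp [him])).symm
  have hexp1 : Real.exp (-(m : ℝ)) ≤ 1 := by
    rw [← Real.exp_zero]
    exact Real.exp_le_exp.mpr (neg_nonpos.mpr (by positivity))
  have hx0 : 0 ≤ x := by linarith
  have hwx : w * x < 1 := by nlinarith
  have hnorm : ‖1 - (w : ℂ) * z‖ = 1 - w * x := by
    rw [hzx]
    have : (1 : ℂ) - (w : ℂ) * (x : ℂ) = ((1 - w * x : ℝ) : ℂ) := by push_cast; ring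
    rw [this, Complex.norm_real, Real.norm_eq_abs, abs_of_pos (by linarith)]
  rw [hnorm]
  have hpos : 0 < 1 - w * x := by linarith
  have hle : 1 - w * x ≤ 2 * Real.exp (-(m : ℝ)) := by nlinarith
  have hkey : Real.exp (m : ℝ) ≤ 2 / (1 - w * x) := by
    rw [le_div_iff₀ hpos]
    calc Real.exp (m : ℝ) * (1 - w * x) ≤ Real.exp (m : ℝ) * (2 * Real.exp (-(m : ℝ))) := by
          exact mul_le_mul_of_nonneg_left hle (Real.exp_pos _).le
      _ = 2 := by
          rw [show Real.exp (m : ℝ) * (2 * Real.exp (-(m : ℝ))) =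
            2 * (Real.exp (-(m : ℝ)) * Real.exp (m : ℝ)) from by ring, ← Real.exp_add]
          simp
  calc (m : ℝ) = Real.log (Real.exp (m : ℝ)) := (Real.log_exp _).symm
    _ ≤ Real.log (2 / (1 - w * x)) := Real.log_le_log (Real.exp_pos _) hkey

lemma lower_bound (μ : Measure ℂ)
    (hμ' : ∀ k : ℕ, μ (seg (Real.exp (-((k : ℝ) + 1)))) =
      ENNReal.ofReal ((Real.log 2 + ((k : ℝ) + 1))⁻¹))
    {w : ℝ} (hw0 : 0 < w) (hw1 : w < 1) (N : ℕ)
    (hwN : 1 - w ≤ Real.exp (-(N : ℝ))) :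
    ENNReal.ofReal (∑ k ∈ Finset.range N, (Real.log 2 + ((k : ℝ) + 1))⁻¹) ≤
      ∫⁻ z in Metric.ball (0 : ℂ) 1,
        ENNReal.ofReal (Real.log (2 / ‖1 - (w : ℂ) * z‖)) ∂μ := by
  classical
  have hterm : ∀ k ∈ Finset.range N, (0 : ℝ) ≤ (Real.log 2 + ((k : ℝ) + 1))⁻¹ := by
    intro k _
    have : (0:ℝ) < Real.log 2 := Real.log_pos (by norm_num)
    positivity
  rw [ENNReal.ofReal_sum_of_nonneg hterm]
  have hseg_ball : ∀ k : ℕ, seg (Real.exp (-((k : ℝ) + 1))) ⊆ Metric.ball (0 : ℂ) 1 := by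
    intro k
    apply seg_subset_ball
    rw [← Real.exp_zero]
    exact Real.exp_le_exp.mpr (neg_nonpos.mpr (by positivity))
  have hstep : ∀ k : ℕ, ENNReal.ofReal ((Real.log 2 + ((k : ℝ) + 1))⁻¹) =
      ∫⁻ z in Metric.ball (0 : ℂ) 1,
        (seg (Real.exp (-((k : ℝ) + 1)))).indicator (fun _ => (1 : ℝ≥0∞)) z ∂μ := by
    intro k
    rw [lintegral_indicator (seg_meas _), setLIntegral_one,
      Measure.restrict_apply (seg_meas _),
      Set.inter_eq_self_of_subset_left (hseg_ball k), hμ' k]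
  calc ∑ k ∈ Finset.range N, ENNReal.ofReal ((Real.log 2 + ((k : ℝ) + 1))⁻¹)
      = ∑ k ∈ Finset.range N, ∫⁻ z in Metric.ball (0 : ℂ) 1,
          (seg (Real.exp (-((k : ℝ) + 1)))).indicator (fun _ => (1 : ℝ≥0∞)) z ∂μ := by
        exact Finset.sum_congr rfl fun k _ => hstep k
    _ = ∫⁻ z in Metric.ball (0 : ℂ) 1, ∑ k ∈ Finset.range N,
          (seg (Real.exp (-((k : ℝ) + 1)))).indicator (fun _ => (1 : ℝ≥0∞)) z ∂μ := by
        rw [lintegral_finset_sum]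
        intro k _
        exact (measurable_const.indicator (seg_meas _))
    _ ≤ ∫⁻ z in Metric.ball (0 : ℂ) 1,
          ENNReal.ofReal (Real.log (2 / ‖1 - (w : ℂ) * z‖)) ∂μ := by
        apply lintegral_mono
        intro z
        -- pointwise bound
        have hsum : ∑ k ∈ Finset.range N,
            (seg (Real.exp (-((k : ℝ) + 1)))).indicator (fun _ => (1 : ℝ≥0∞)) z =
            (((Finset.range N).filter
              (fun k : ℕ => z ∈ seg (Real.exp (-((k : ℝ) + 1))))).card : ℝ≥0∞) := by
          rw [← Finset.sum_boole (fun k : ℕ => z ∈ seg (Real.exp (-((k : ℝ) + 1))))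
            (Finset.range N)]
          exact Finset.sum_congr rfl fun k _ => Set.indicator_apply _ _ _
        show (fun a => ∑ k ∈ Finset.range N,
            (seg (Real.exp (-((k : ℝ) + 1)))).indicator (fun _ => (1 : ℝ≥0∞)) a) z ≤ _
        simp only []
        rw [hsum]
        set s := (Finset.range N).filter
          (fun k : ℕ => z ∈ seg (Real.exp (-((k : ℝ) + 1)))) with hs
        set m := s.card with hmdef
        rcases Nat.eq_zero_or_pos m with hm0 | hm1
        · simp [hm0]
        · -- find k ∈ s with m - 1 ≤ k, i.e. m ≤ k + 1
          have hex : ∃ k ∈ s, m ≤ k + 1 := by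
            by_contra hcon
            push_neg at hcon
            have hsub : s ⊆ Finset.range (m - 1) := by
              intro k hk
              have := hcon k hk
              rw [Finset.mem_range]
              omega
            have := Finset.card_le_card hsub
            rw [Finset.card_range] at this
            omega
          obtain ⟨k, hks, hmk⟩ := hex
          have hkN : k ∈ Finset.range N := Finset.mem_filter.mp hks |>.1
          have hzk : z ∈ seg (Real.exp (-((k : ℝ) + 1))) :=
            (Finset.mem_filter.mp hks).2
          have hmono : seg (Real.exp (-((k : ℝ) + 1))) ⊆ seg (Real.exp (-(m : ℝ))) := by
            apply seg_mono
            apply Real.exp_le_exp.mpr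
            have : (m : ℝ) ≤ (k : ℝ) + 1 := by exact_mod_cast hmk
            linarith
          have hzm : z ∈ seg (Real.exp (-(m : ℝ))) := hmono hzk
          have hmN : m ≤ N := by
            have : s ⊆ Finset.range N := Finset.filter_subset _ _
            have := Finset.card_le_card this
            rw [Finset.card_range] at this
            omega
          have hwm : 1 - w ≤ Real.exp (-(m : ℝ)) := by
            refine le_trans hwN (Real.exp_le_exp.mpr ?_)
            have : (m : ℝ) ≤ (N : ℝ) := by exact_mod_cast hmN
            linarith
          have hlog := log_bound hw0 hw1 hm1 hzm hwm
          calc ((m : ℕ) : ℝ≥0∞) = ENNReal.ofReal (m : ℝ) := (ENNReal.ofReal_natCast m).symm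
            _ ≤ ENNReal.ofReal (Real.log (2 / ‖1 - (w : ℂ) * z‖)) :=
              ENNReal.ofReal_le_ofReal hlog

end Statement17Aux

/-- For the measure on the radius `[0,1) ⊂ 𝔻` with `μ([1-t,1)) = (log(2/t))⁻¹`, the
integrals `∫ log(2/(1-wt)) dμ(t)` tend to `∞` as `w → 1⁻`; in particular
`sup_{w ∈ 𝔻} ∫_𝔻 log(2/|1 - w̄z|) dμ(z) = ∞`, so the one-function test is not
necessary for being a Carleson measure. -/
theorem statement17 (μ : Measure ℂ) [IsFiniteMeasure μ]
    (hμsupp : μ {z : ℂ | ∃ x : ℝ, 0 ≤ x ∧ x < 1 ∧ z = (x : ℂ)}ᶜ = 0)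
    (hμ : ∀ t : ℝ, 0 < t → t ≤ 1 →
      μ {z : ℂ | ∃ x : ℝ, 1 - t ≤ x ∧ x < 1 ∧ z = (x : ℂ)} =
        ENNReal.ofReal (Real.log (2 / t))⁻¹) :
    Filter.Tendsto
      (fun w : ℝ => ∫⁻ z in Metric.ball (0:ℂ) 1,
        ENNReal.ofReal (Real.log (2 / ‖1 - (w : ℂ) * z‖)) ∂μ)
      (nhdsWithin 1 (Set.Ioo (0:ℝ) 1)) (nhds ⊤) ∧
    ¬ ∃ M : ℝ, ∀ w ∈ Metric.ball (0:ℂ) 1,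
      (∫⁻ z in Metric.ball (0:ℂ) 1,
          ENNReal.ofReal (Real.log (2 / ‖1 - (starRingEnd ℂ) w * z‖)) ∂μ) ≤
        ENNReal.ofReal M := by
  have hμ' : ∀ k : ℕ, μ (Statement17Aux.seg (Real.exp (-((k : ℝ) + 1)))) =
      ENNReal.ofReal ((Real.log 2 + ((k : ℝ) + 1))⁻¹) := by
    intro k
    have h1 : (0:ℝ) < Real.exp (-((k : ℝ) + 1)) := Real.exp_pos _
    have h2 : Real.exp (-((k : ℝ) + 1)) ≤ 1 := by
      rw [← Real.exp_zero]
      exact Real.exp_le_exp.mpr (neg_nonpos.mpr (by positivity))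
    have h3 := hμ _ h1 h2
    rw [Statement17Aux.seg_eq] at h3
    rw [h3]
    congr 2
    rw [Real.log_div two_ne_zero (Real.exp_ne_zero _), Real.log_exp]
    ring
  have hlog2 : Real.log 2 ≤ 1 := by
    have := Real.log_le_sub_one_of_pos (show (0:ℝ) < 2 by norm_num)
    linarith
  have hlog2pos : (0:ℝ) < Real.log 2 := Real.log_pos (by norm_num)
  have hdiv : Tendsto (fun N : ℕ => ∑ k ∈ Finset.range N,
      (Real.log 2 + ((k : ℝ) + 1))⁻¹) atTop atTop := by
    apply tendsto_atTop_mono ?_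
      (Tendsto.const_mul_atTop (show (0:ℝ) < 1/2 by norm_num)
        Real.tendsto_sum_range_one_div_nat_succ_atTop)
    intro N
    rw [Finset.mul_sum]
    apply Finset.sum_le_sum
    intro k _
    have hk1 : (0:ℝ) < (k : ℝ) + 1 := by positivity
    have h2k : Real.log 2 + ((k : ℝ) + 1) ≤ 2 * ((k : ℝ) + 1) := by
      have : (1:ℝ) ≤ (k : ℝ) + 1 := by simp
      linarith
    have hq : (0:ℝ) < Real.log 2 + ((k : ℝ) + 1) := by linarith
    calc (1/2 : ℝ) * (1 / ((k : ℝ) + 1)) = (2 * ((k : ℝ) + 1))⁻¹ := by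
          field_simp
      _ ≤ (Real.log 2 + ((k : ℝ) + 1))⁻¹ := by
          apply inv_anti₀ hq h2k
  have hten : Filter.Tendsto
      (fun w : ℝ => ∫⁻ z in Metric.ball (0:ℂ) 1,
        ENNReal.ofReal (Real.log (2 / ‖1 - (w : ℂ) * z‖)) ∂μ)
      (nhdsWithin 1 (Set.Ioo (0:ℝ) 1)) (nhds ⊤) := by
    rw [ENNReal.tendsto_nhds_top_iff_nat]
    intro n
    obtain ⟨N, hN⟩ := (hdiv.eventually_gt_atTop (n : ℝ)).exists
    have hev1 : ∀ᶠ w in nhdsWithin (1:ℝ) (Set.Ioo (0:ℝ) 1), w ∈ Set.Ioo (0:ℝ) 1 :=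
      eventually_mem_nhdsWithin
    have hev2 : ∀ᶠ w in nhdsWithin (1:ℝ) (Set.Ioo (0:ℝ) 1),
        1 - Real.exp (-(N : ℝ)) < w :=
      nhdsWithin_le_nhds (eventually_gt_nhds (by
        have := Real.exp_pos (-(N : ℝ)); linarith))
    filter_upwards [hev1, hev2] with w hw hw2
    have hlb := Statement17Aux.lower_bound μ hμ' hw.1 hw.2 N (by linarith)
    have hsumpos : (0:ℝ) < ∑ k ∈ Finset.range N, (Real.log 2 + ((k : ℝ) + 1))⁻¹ :=
      lt_of_le_of_lt (Nat.cast_nonneg n) hN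
    calc ((n : ℕ) : ℝ≥0∞) = ENNReal.ofReal (n : ℝ) := (ENNReal.ofReal_natCast n).symm
      _ < ENNReal.ofReal (∑ k ∈ Finset.range N, (Real.log 2 + ((k : ℝ) + 1))⁻¹) :=
          (ENNReal.ofReal_lt_ofReal_iff hsumpos).mpr hN
      _ ≤ _ := hlb
  refine ⟨hten, ?_⟩
  rintro ⟨M, hM⟩
  haveI hNB : (nhdsWithin (1:ℝ) (Set.Ioo (0:ℝ) 1)).NeBot := by
    apply mem_closure_iff_nhdsWithin_neBot.mp
    rw [closure_Ioo (by norm_num : (0:ℝ) ≠ 1)]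
    exact ⟨zero_le_one, le_refl 1⟩
  have hev := hten.eventually (eventually_gt_nhds
    (show ENNReal.ofReal M < ⊤ from ENNReal.ofReal_lt_top))
  obtain ⟨w, hw1, hw2⟩ := (hev.and eventually_mem_nhdsWithin).exists
  have hball : (w : ℂ) ∈ Metric.ball (0:ℂ) 1 := by
    rw [mem_ball_zero_iff, Complex.norm_real, Real.norm_eq_abs, abs_of_pos hw2.1]
    exact hw2.2
  have hle := hM (w : ℂ) hball
  rw [Complex.conj_ofReal] at hle
  exact absurd hle (not_le.mpr hw1)

end
end
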